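/- Let F : U → ℂⁿ be a continuous map on an open set U, injective on a compact subset A ⊆ U, and a local homeomorphism at every point of A. Then there exists an open neighborhood V of A with A ⊆ V ⊆ U such that F restricted to V is injective. -/
import Mathlib


open Set Topology

/-- a continuous map which is injective on a compact set `A` and a local
homeomorphism (onto its image) at each point of `A` is injective on some open
neighborhood of `A`. -/
theorem injOn_nhd_of_injOn_compact {X : Type*} [TopologicalSpace X]
    [TopologicalSpace.MetrizableSpace X] (n : ℕ)
    (U : Set X) (hU : IsOpen U) (A : Set X) (hA : IsCompact A) (hAU : A ⊆ U)
    (F : X → EuclideanSpace ℂ (Fin n)) (hFcont : ContinuousOn F U)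
    (hinj : Set.InjOn F A)
    (hloc : ∀ a ∈ A, ∃ W : Set X, IsOpen W ∧ a ∈ W ∧ W ⊆ U ∧
      Topology.IsEmbedding (W.restrict F)) :
    ∃ V : Set X, IsOpen V ∧ A ⊆ V ∧ V ⊆ U ∧ Set.InjOn F V := by
  rcases A.eq_empty_or_nonempty with rfl | hAne
  · exact ⟨∅, isOpen_empty, subset_rfl, empty_subset _, Set.injOn_empty _⟩
  letI : MetricSpace X := TopologicalSpace.metrizableSpaceMetric X
  by_contra hcon
  push_neg at hcon
  have key : ∀ k : ℕ, ∃ x y : X, x ∈ Metric.thickening (1/(k+1)) A ∩ U ∧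
      y ∈ Metric.thickening (1/(k+1)) A ∩ U ∧ F x = F y ∧ x ≠ y := by
    intro k
    have hVopen : IsOpen (Metric.thickening (1/(k+1)) A ∩ U) :=
      Metric.isOpen_thickening.inter hU
    have hAV : A ⊆ Metric.thickening (1/(k+1)) A ∩ U :=
      subset_inter (Metric.self_subset_thickening (by positivity) A) hAU
    have h := hcon _ hVopen hAV inter_subset_right
    rw [Set.InjOn] at h
    push_neg at h
    obtain ⟨x, hx, y, hy, hxy, hne⟩ := h
    exact ⟨x, y, hx, hy, hxy, hne⟩
  choose x y hx hy hFxy hne using key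
  have hxa : ∀ k : ℕ, ∃ a ∈ A, dist (x k) a < 1/(k+1) := by
    intro k
    exact (Metric.mem_thickening_iff).mp (hx k).1
  have hyb : ∀ k : ℕ, ∃ b ∈ A, dist (y k) b < 1/(k+1) := by
    intro k
    exact (Metric.mem_thickening_iff).mp (hy k).1
  choose a ha hda using hxa
  choose b hb hdb using hyb
  have htend0 : Filter.Tendsto (fun k : ℕ => 1/((k:ℝ)+1)) Filter.atTop (nhds 0) :=
    tendsto_one_div_add_atTop_nhds_zero_nat
  obtain ⟨l, hl, φ, hφ, hlφ⟩ := hA.tendsto_subseq ha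
  obtain ⟨m, hm, ψ, hψ, hmψ⟩ := hA.tendsto_subseq (fun k => hb (φ k))
  set σ : ℕ → ℕ := φ ∘ ψ with hσ
  have hσmono : StrictMono σ := hφ.comp hψ
  have hσtop : Filter.Tendsto σ Filter.atTop Filter.atTop := hσmono.tendsto_atTop
  have hdist0 : Filter.Tendsto (fun k => dist (x (σ k)) (a (σ k))) Filter.atTop (nhds 0) := by
    apply squeeze_zero (fun k => dist_nonneg) (fun k => (hda (σ k)).le)
    exact htend0.comp hσtop
  have hdist0' : Filter.Tendsto (fun k => dist (y (σ k)) (b (σ k))) Filter.atTop (nhds 0) := by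
    apply squeeze_zero (fun k => dist_nonneg) (fun k => (hdb (σ k)).le)
    exact htend0.comp hσtop
  have halim : Filter.Tendsto (fun k => a (σ k)) Filter.atTop (nhds l) :=
    hlφ.comp hψ.tendsto_atTop
  have hblim : Filter.Tendsto (fun k => b (σ k)) Filter.atTop (nhds m) := hmψ
  have hxlim : Filter.Tendsto (fun k => x (σ k)) Filter.atTop (nhds l) := by
    rw [tendsto_iff_dist_tendsto_zero]
    apply squeeze_zero (fun k => dist_nonneg)
      (fun k => dist_triangle (x (σ k)) (a (σ k)) l)
    have := hdist0.add (tendsto_iff_dist_tendsto_zero.mp halim)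
    simpa using this
  have hylim : Filter.Tendsto (fun k => y (σ k)) Filter.atTop (nhds m) := by
    rw [tendsto_iff_dist_tendsto_zero]
    apply squeeze_zero (fun k => dist_nonneg)
      (fun k => dist_triangle (y (σ k)) (b (σ k)) m)
    have := hdist0'.add (tendsto_iff_dist_tendsto_zero.mp hblim)
    simpa using this
  have hcontl : ContinuousAt F l := hFcont.continuousAt (hU.mem_nhds (hAU hl))
  have hcontm : ContinuousAt F m := hFcont.continuousAt (hU.mem_nhds (hAU hm))
  have hFl : Filter.Tendsto (fun k => F (x (σ k))) Filter.atTop (nhds (F l)) :=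
    hcontl.tendsto.comp hxlim
  have hFm : Filter.Tendsto (fun k => F (y (σ k))) Filter.atTop (nhds (F m)) :=
    hcontm.tendsto.comp hylim
  have hFlm : F l = F m := by
    apply tendsto_nhds_unique hFl
    simpa only [hFxy] using hFm
  have hlm : l = m := hinj hl hm hFlm
  subst hlm
  obtain ⟨W, hWopen, hlW, hWU, hWemb⟩ := hloc l hl
  have hWinj : Set.InjOn F W := Set.injOn_iff_injective.mpr hWemb.injective
  have hxW : ∀ᶠ k in Filter.atTop, x (σ k) ∈ W := hxlim (hWopen.mem_nhds hlW)
  have hyW : ∀ᶠ k in Filter.atTop, y (σ k) ∈ W := hylim (hWopen.mem_nhds hlW)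
  obtain ⟨k, hkx, hky⟩ := (hxW.and hyW).exists
  exact hne (σ k) (hWinj hkx hky (hFxy (σ k)))
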